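/- Suppose two firms have strictly increasing payoff functions F_A, F_B : ℕ → ℝ with F_B(t) > F_A(t) for all t (firm B has the better channel). Let T_c = min{t : F_A(t) > c}. Then in the profile (T_A, T_B) = (T_c + 1, T_c), firm B earns F_B(T_c) − c − dS_B > −dS_B while firm A earns −dS_A, and firm A cannot profit by deviating to any time ≤ T_c provided F_A(T_c)/2 ≤ c and F_A(T_c − 1) ≤ c. -/

import Mathlib

/-- Payoff of a firm with gross payoff function `F` decoding at `TA` against an
opponent decoding at `TB`: strict first mover earns `F TA - c - dS`, a tie
earns `F TA / 2 - c - dS`, the late mover earns `-dS`. -/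
noncomputable def latencyPayoff (F : ℕ → ℝ) (c dS : ℝ) (TA TB : ℕ) : ℝ :=
  if TA < TB then F TA - c - dS
  else if TA = TB then F TA / 2 - c - dS
  else -dS

section LatencyPayoff

variable (F : ℕ → ℝ) (c dS : ℝ)

theorem latencyPayoff_of_lt {TA TB : ℕ} (h : TA < TB) :
    latencyPayoff F c dS TA TB = F TA - c - dS := by
  simp only [latencyPayoff, if_pos h]

theorem latencyPayoff_self (T : ℕ) : latencyPayoff F c dS T T = F T / 2 - c - dS := by
  simp only [latencyPayoff, lt_irrefl, if_false, if_true]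

theorem latencyPayoff_of_gt {TA TB : ℕ} (h : TB < TA) : latencyPayoff F c dS TA TB = -dS := by
  simp only [latencyPayoff, if_neg h.not_gt, if_neg h.ne']

variable {F c}

theorem latencyPayoff_le_of_le {T t : ℕ} (h_early : ∀ s < T, F s ≤ c) (h_tie : F T / 2 ≤ c)
    (ht : t ≤ T) : latencyPayoff F c dS t T ≤ -dS := by
  rcases ht.lt_or_eq with ht | rfl
  · rw [latencyPayoff_of_lt F c dS ht]
    linarith [h_early t ht]
  · rw [latencyPayoff_self]
    linarith

end LatencyPayoff

theorem stmt_13_general (F_A F_B : ℕ → ℝ) (c dS_A dS_B : ℝ) (Tc : ℕ)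
    (hAB : ∀ t, F_B t > F_A t)
    (hTc : F_A Tc > c ∧ ∀ t < Tc, ¬ F_A t > c)
    (hhalf : F_A Tc / 2 ≤ c) :
    latencyPayoff F_B c dS_B Tc (Tc + 1) = F_B Tc - c - dS_B ∧
    F_B Tc - c - dS_B > -dS_B ∧
    latencyPayoff F_A c dS_A (Tc + 1) Tc = -dS_A ∧
    ∀ t ≤ Tc, latencyPayoff F_A c dS_A t Tc ≤ latencyPayoff F_A c dS_A (Tc + 1) Tc := by
  obtain ⟨h_exceeds, h_early⟩ := hTc
  have h_late : latencyPayoff F_A c dS_A (Tc + 1) Tc = -dS_A :=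
    latencyPayoff_of_gt F_A c dS_A (Nat.lt_succ_self Tc)
  refine ⟨latencyPayoff_of_lt F_B c dS_B (Nat.lt_succ_self Tc), by linarith [hAB Tc], h_late, ?_⟩
  rw [h_late]
  exact fun t ht => latencyPayoff_le_of_le dS_A (fun s hs => not_lt.mp (h_early s hs)) hhalf ht

/-- Non-identical channels: firm B has the strictly better channel
(`F_B > F_A` pointwise). With `T_c` the earliest time `F_A` exceeds `c`, in
the profile `(T_A, T_B) = (T_c + 1, T_c)` firm B earns
`F_B T_c - c - dS_B > -dS_B`, firm A earns `-dS_A`, and firm A cannot profit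
by deviating to any time `≤ T_c`, provided `F_A T_c / 2 ≤ c` and
`F_A (T_c - 1) ≤ c`. -/
theorem stmt_13 (F_A F_B : ℕ → ℝ) (c dS_A dS_B : ℝ) (Tc : ℕ)
    (hFA : StrictMono F_A) (hFB : StrictMono F_B)
    (hAB : ∀ t, F_B t > F_A t)
    (hc : 0 < c) (hdA : 0 ≤ dS_A) (hdB : 0 ≤ dS_B)
    (hTc : F_A Tc > c ∧ ∀ t < Tc, ¬ F_A t > c)
    (hhalf : F_A Tc / 2 ≤ c) (hprev : F_A (Tc - 1) ≤ c) :
    latencyPayoff F_B c dS_B Tc (Tc + 1) = F_B Tc - c - dS_B ∧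
    F_B Tc - c - dS_B > -dS_B ∧
    latencyPayoff F_A c dS_A (Tc + 1) Tc = -dS_A ∧
    ∀ t ≤ Tc, latencyPayoff F_A c dS_A t Tc ≤ latencyPayoff F_A c dS_A (Tc + 1) Tc :=
  stmt_13_general F_A F_B c dS_A dS_B Tc hAB hTc hhalf
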